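/- Every element n of the group N₁ factors uniquely as n = u₁(y)·c with y ∈ F and c ∈ C; that is, N₁ is the semidirect product of Y := {u₁(y) : y ∈ F} and C, with Y ∩ C = {I₄}. -/

import Mathlib

open Matrix

/-!
Both `u₁(y) = n(s y, 0, 0)` and the elements of `C` are of the form `n(u, x₁, x₂)`, and
`n(v, 0, 0) · n(a, x₁, x₂) = n(v + a, x₁, x₂ - v ι(x₁))`. So factoring `n(u, x₁, x₂)` as
`u₁(y) · c` amounts to writing `u = s y + a` with `y, a ∈ F`, i.e. to the decomposition
`E = sF ⊕ F` into the `-1` and `+1` eigenspaces of `ι`, which exists and is unique because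
`2 ≠ 0` and `s ≠ 0`. Left multiplication by `u₁(y)` preserves the defining relation of `N₁`
since `ι(s y) = -s y`.
-/

/-- `n(u, x₁, x₂) = [[1,u,x₁,x₂],[0,1,0,−ι(x₁)],[0,0,1,−ι(u)],[0,0,0,1]]`. -/
def nmat {E : Type*} [Field E] (ι : E →+* E) (u x₁ x₂ : E) :
    Matrix (Fin 4) (Fin 4) E :=
  !![1, u, x₁, x₂; 0, 1, 0, -ι x₁; 0, 0, 1, -ι u; 0, 0, 0, 1]

/-- The group `N₁`. -/
def N1 {E : Type*} [Field E] (ι : E →+* E) : Set (Matrix (Fin 4) (Fin 4) E) :=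
  {m | ∃ u x₁ x₂ : E, x₂ + ι x₂ + u * ι x₁ + x₁ * ι u = 0 ∧ m = nmat ι u x₁ x₂}

/-- `C = {n(u, x₁, x₂) ∈ N₁ : u ∈ F}`. -/
def Cset {E : Type*} [Field E] (ι : E →+* E) : Set (Matrix (Fin 4) (Fin 4) E) :=
  {m | ∃ u x₁ x₂ : E, ι u = u ∧ x₂ + ι x₂ + u * ι x₁ + x₁ * ι u = 0 ∧
    m = nmat ι u x₁ x₂}

/-- `u₁(y) = I₄ + s·y·(E₁₂ + E₃₄)`. -/
def u1mat {E : Type*} [Field E] (s y : E) : Matrix (Fin 4) (Fin 4) E :=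
  1 + (s * y) • (Matrix.single 0 1 1 + Matrix.single 2 3 1)

section Involution

variable {E : Type*} [Field E] {ι : E →+* E} {s : E}

theorem exists_eq_mul_add_of_fixed (htwo : (2 : E) ≠ 0) (hinv : ∀ x, ι (ι x) = x)
    (hs0 : s ≠ 0) (hss : ι s = -s) (u : E) :
    ∃ y a : E, ι y = y ∧ ι a = a ∧ u = s * y + a := by
  refine ⟨(u - ι u) / (2 * s), (u + ι u) / 2, ?_, ?_, ?_⟩
  · rw [map_div₀, map_sub, hinv, map_mul, map_ofNat, hss]
    field_simp
    ring
  · rw [map_div₀, map_add, hinv, map_ofNat, add_comm]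
  · field_simp
    ring

theorem eq_and_eq_of_mul_add_eq_mul_add (htwo : (2 : E) ≠ 0) (hs0 : s ≠ 0)
    (hss : ι s = -s) {y a y' a' : E} (hy : ι y = y) (ha : ι a = a) (hy' : ι y' = y')
    (ha' : ι a' = a') (h : s * y + a = s * y' + a') : y = y' ∧ a = a' := by
  have hι := congrArg ι h
  simp only [map_add, map_mul, hss, hy, ha, hy', ha'] at hι
  have hyy' : (2 * s) * (y - y') = 0 := by linear_combination h - hι
  have hy_eq : y = y' :=
    sub_eq_zero.mp ((mul_eq_zero.mp hyy').resolve_left (mul_ne_zero htwo hs0))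
  exact ⟨hy_eq, by linear_combination h - s * hy_eq⟩

end Involution

section Matrices

variable {E : Type*} [Field E] (ι : E →+* E)

theorem nmat_inj {u x₁ x₂ u' x₁' x₂' : E} :
    nmat ι u x₁ x₂ = nmat ι u' x₁' x₂' ↔ u = u' ∧ x₁ = x₁' ∧ x₂ = x₂' := by
  refine ⟨fun h => ?_, fun ⟨hu, hx₁, hx₂⟩ => hu ▸ hx₁ ▸ hx₂ ▸ rfl⟩
  have h₁ := congrFun (congrFun h 0) 1
  have h₂ := congrFun (congrFun h 0) 2
  have h₃ := congrFun (congrFun h 0) 3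
  simp only [nmat, of_apply, cons_val', cons_val_zero, cons_val_one, cons_val_two,
    cons_val_three, empty_val', cons_val_fin_one] at h₁ h₂ h₃
  exact ⟨h₁, h₂, h₃⟩

theorem u1mat_eq_nmat {s y : E} (hss : ι s = -s) (hy : ι y = y) :
    u1mat s y = nmat ι (s * y) 0 0 := by
  ext i j
  fin_cases i <;> fin_cases j <;>
    simp [u1mat, nmat, one_apply, hss, hy]

theorem nmat_zero_zero_mul_nmat (v a x₁ x₂ : E) :
    nmat ι v 0 0 * nmat ι a x₁ x₂ = nmat ι (v + a) x₁ (x₂ - v * ι x₁) := by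
  ext i j
  fin_cases i <;> fin_cases j <;>
    simp [nmat, mul_apply, Fin.sum_univ_four] <;> ring

theorem trace_relation_shift (hinv : ∀ x, ι (ι x) = x) {v : E} (hv : ι v = -v)
    (a x₁ x₂ : E) :
    (x₂ + v * ι x₁) + ι (x₂ + v * ι x₁) + a * ι x₁ + x₁ * ι a =
      x₂ + ι x₂ + (v + a) * ι x₁ + x₁ * ι (v + a) := by
  simp only [map_add, map_mul, hv, hinv]
  ring

end Matrices

theorem statement15_general {E : Type*} [Field E] (htwo : (2 : E) ≠ 0)
    (ι : E →+* E) (hinv : ∀ x, ι (ι x) = x)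
    (s : E) (hs0 : s ≠ 0) (hss : ι s = -s) :
    (∀ m ∈ N1 ι, ∃ y : E, ∃ c : Matrix (Fin 4) (Fin 4) E,
      ι y = y ∧ c ∈ Cset ι ∧ m = u1mat s y * c ∧
      (∀ y' : E, ∀ c' : Matrix (Fin 4) (Fin 4) E,
        ι y' = y' → c' ∈ Cset ι → m = u1mat s y' * c' → y' = y ∧ c' = c)) ∧
    (∀ y : E, ι y = y → u1mat s y ∈ Cset ι → u1mat s y = 1) := by
  have hsy {y : E} (hy : ι y = y) : ι (s * y) = -(s * y) := by
    rw [map_mul, hss, hy, neg_mul]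
  refine ⟨?_, ?_⟩
  · rintro m ⟨u, x₁, x₂, hrel, rfl⟩
    obtain ⟨y, a, hy, ha, rfl⟩ := exists_eq_mul_add_of_fixed htwo hinv hs0 hss u
    refine ⟨y, nmat ι a x₁ (x₂ + s * y * ι x₁), hy,
      ⟨a, x₁, _, ha, by rwa [trace_relation_shift ι hinv (hsy hy)], rfl⟩, ?_, ?_⟩
    · rw [u1mat_eq_nmat ι hss hy, nmat_zero_zero_mul_nmat, add_sub_cancel_right]
    · rintro y' c' hy' ⟨a', x₁', x₂', ha', -, rfl⟩ heq
      rw [u1mat_eq_nmat ι hss hy', nmat_zero_zero_mul_nmat, nmat_inj] at heq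
      obtain ⟨hu, rfl, rfl⟩ := heq
      obtain ⟨rfl, rfl⟩ := eq_and_eq_of_mul_add_eq_mul_add htwo hs0 hss hy' ha' hy ha hu.symm
      exact ⟨rfl, by rw [sub_add_cancel]⟩
  · rintro y hy ⟨u, x₁, x₂, hu, -, heq⟩
    rw [u1mat_eq_nmat ι hss hy, nmat_inj] at heq
    have hy0 : y = 0 :=
      (eq_and_eq_of_mul_add_eq_mul_add htwo hs0 hss hy (map_zero ι) (map_zero ι) hu
        (by rw [heq.1, mul_zero, zero_add, add_zero])).1
    rw [hy0, u1mat, mul_zero, zero_smul, add_zero]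

/-- Every element of `N₁` factors uniquely as `u₁(y)·c` with `y ∈ F` and `c ∈ C`;
moreover `Y ∩ C = {I₄}`, so `N₁` is the semidirect product of `Y` and `C`. -/
theorem statement15 {E : Type*} [Field E] (htwo : (2 : E) ≠ 0)
    (ι : E →+* E) (hinv : ∀ x, ι (ι x) = x) (hni : ι ≠ RingHom.id E)
    (s : E) (hs0 : s ≠ 0) (hss : ι s = -s) :
    (∀ m ∈ N1 ι, ∃ y : E, ∃ c : Matrix (Fin 4) (Fin 4) E,
      ι y = y ∧ c ∈ Cset ι ∧ m = u1mat s y * c ∧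
      (∀ y' : E, ∀ c' : Matrix (Fin 4) (Fin 4) E,
        ι y' = y' → c' ∈ Cset ι → m = u1mat s y' * c' → y' = y ∧ c' = c)) ∧
    (∀ y : E, ι y = y → u1mat s y ∈ Cset ι → u1mat s y = 1) :=
  statement15_general htwo ι hinv s hs0 hss
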